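/- arXiv:2310.15854 — 4 statements merged into one kernel-verified Lean document; each statement's English description precedes it below -/
import Mathlib

section
/- Let Λ be absolutely continuous with derivative λ(t, X_t) where λ(t,x) > 0 for x < 0 and λ(t,x) = 0 for x ≥ 0, and let X be continuous. Then the image Λ(𝒵) of the zero set 𝒵 = {t ∈ [0,T] : X_t = 0} under Λ has Lebesgue measure zero. -/
open MeasureTheory Set

/-!
Extend `λ(·, X_·)` by zero outside `[0, T]` to a nonnegative integrable density `g`. On `𝒵`,
`Λ` agrees with the primitive `G` of `g`, which is a continuous Stieltjes function whose
Stieltjes measure is `g • volume`. Covering a set by intervals `(a, b]` and mapping them by the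
monotone `G` shows `volume (G '' s) ≤ ∫⁻ x in s, g x`, and `g = λ(t, 0) = 0` on `𝒵`.
-/

namespace StieltjesFunction

theorem volume_image_le_measure (f : StieltjesFunction ℝ) (s : Set ℝ) :
    volume (f '' s) ≤ f.measure s := by
  have h_outer : f.measure s = f.outer s := by rw [StieltjesFunction.measure]; rfl
  rw [h_outer, StieltjesFunction.outer, OuterMeasure.ofFunction_apply]
  refine le_iInf fun t => le_iInf fun hst => ?_
  have h_cover : f '' s ⊆ ⋃ n, f '' t n := by
    rw [← image_iUnion]
    exact image_mono hst
  refine (measure_mono h_cover).trans <| (measure_iUnion_le _).trans <|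
    ENNReal.tsum_le_tsum fun n => ?_
  rw [length_eq]
  refine le_iInf fun a => le_iInf fun b => le_iInf fun hab => ?_
  have h_image : f '' t n ⊆ Icc (f a) (f b) := by
    rintro _ ⟨x, hx, rfl⟩
    have hx' := hab ⟨hx, not_isBot x⟩
    exact ⟨f.mono hx'.1.le, f.mono hx'.2⟩
  exact (measure_mono h_image).trans_eq Real.volume_Icc

end StieltjesFunction

namespace MeasureTheory.Integrable

variable {g : ℝ → ℝ}

theorem monotone_primitive (hg : Integrable g) (hg₀ : 0 ≤ᵐ[volume] g) (a : ℝ) :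
    Monotone fun t => ∫ x in a..t, g x := by
  intro t u htu
  calc ∫ x in a..t, g x
      ≤ (∫ x in a..t, g x) + ∫ x in t..u, g x :=
        le_add_of_nonneg_right (intervalIntegral.integral_nonneg_of_ae htu hg₀)
    _ = ∫ x in a..u, g x :=
        intervalIntegral.integral_add_adjacent_intervals hg.intervalIntegrable
          hg.intervalIntegrable

noncomputable def primitiveStieltjes (hg : Integrable g) (hg₀ : 0 ≤ᵐ[volume] g) (a : ℝ) :
    StieltjesFunction ℝ where
  toFun t := ∫ x in a..t, g x
  mono' := hg.monotone_primitive hg₀ a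
  right_continuous' _ := (hg.continuous_primitive a).continuousWithinAt

@[simp]
theorem primitiveStieltjes_apply (hg : Integrable g) (hg₀ : 0 ≤ᵐ[volume] g) (a t : ℝ) :
    hg.primitiveStieltjes hg₀ a t = ∫ x in a..t, g x :=
  rfl

theorem measure_primitiveStieltjes (hg : Integrable g) (hg₀ : 0 ≤ᵐ[volume] g) (a : ℝ) :
    (hg.primitiveStieltjes hg₀ a).measure = volume.withDensity fun x => ENNReal.ofReal (g x) := by
  refine Measure.ext_of_Ioc _ _ fun b c hbc => ?_
  rw [StieltjesFunction.measure_Ioc, withDensity_apply _ measurableSet_Ioc,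
    ← ofReal_integral_eq_lintegral_ofReal hg.integrableOn (ae_restrict_of_ae hg₀),
    primitiveStieltjes_apply, primitiveStieltjes_apply,
    intervalIntegral.integral_interval_sub_left hg.intervalIntegrable hg.intervalIntegrable,
    intervalIntegral.integral_of_le hbc.le]

theorem volume_image_primitive_le (hg : Integrable g) (hg₀ : 0 ≤ᵐ[volume] g) (a : ℝ)
    (s : Set ℝ) :
    volume ((fun t => ∫ x in a..t, g x) '' s) ≤ ∫⁻ x in s, ENNReal.ofReal (g x) := by
  calc volume ((fun t => ∫ x in a..t, g x) '' s)
      ≤ (hg.primitiveStieltjes hg₀ a).measure s :=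
        (hg.primitiveStieltjes hg₀ a).volume_image_le_measure s
    _ = ∫⁻ x in s, ENNReal.ofReal (g x) := by
        rw [measure_primitiveStieltjes, withDensity_apply']

theorem volume_image_primitive_eq_zero (hg : Integrable g) (hg₀ : 0 ≤ᵐ[volume] g) (a : ℝ)
    {s : Set ℝ} (hs : MeasurableSet s) (hgs : ∀ᵐ x, x ∈ s → g x = 0) :
    volume ((fun t => ∫ x in a..t, g x) '' s) = 0 := by
  refine le_antisymm ((hg.volume_image_primitive_le hg₀ a s).trans_eq ?_) zero_le
  rw [setLIntegral_congr_fun_ae hs (g := fun _ => 0) (hgs.mono fun x hx hxs => by simp [hx hxs]),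
    lintegral_zero]

end MeasureTheory.Integrable

theorem image_of_zero_set_null_general
    (T : ℝ) (X : ℝ → ℝ) (l : ℝ → ℝ → ℝ)
    (hX : Continuous X)
    (hl_nonneg : ∀ t x, 0 ≤ l t x)
    (hl_zero : ∀ t x, 0 ≤ x → l t x = 0)
    (hint : IntegrableOn (fun s => l s (X s)) (Icc 0 T))
    (Λ : ℝ → ℝ) (hΛ : ∀ t, Λ t = ∫ s in (0 : ℝ)..t, l s (X s)) :
    volume (Λ '' {t | t ∈ Icc (0 : ℝ) T ∧ X t = 0}) = 0 := by
  set g := (Icc 0 T).indicator fun s => l s (X s)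
  have hg : Integrable g := (integrable_indicator_iff measurableSet_Icc).2 hint
  have hg₀ : 0 ≤ᵐ[volume] g := ae_of_all _ <| indicator_nonneg fun s _ => hl_nonneg s (X s)
  have hΛg : EqOn Λ (fun t => ∫ s in (0 : ℝ)..t, g s) {t | t ∈ Icc 0 T ∧ X t = 0} := by
    rintro t ⟨ht, -⟩
    refine (hΛ t).trans <| intervalIntegral.integral_congr fun s hs => ?_
    rw [uIcc_of_le ht.1] at hs
    have hsT : s ∈ Icc 0 T := ⟨hs.1, hs.2.trans ht.2⟩
    simp only [g, indicator_of_mem hsT]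
  have hZ : IsClosed {t | t ∈ Icc (0 : ℝ) T ∧ X t = 0} :=
    isClosed_Icc.inter (isClosed_eq hX continuous_const)
  rw [image_congr hΛg]
  refine hg.volume_image_primitive_eq_zero hg₀ 0 hZ.measurableSet (ae_of_all _ ?_)
  rintro t ⟨ht, hXt⟩
  simp only [g, indicator_of_mem ht, hXt]
  exact hl_zero t 0 le_rfl

/-- If `Λ_t = ∫₀ᵗ λ(s, X_s) ds` where `λ(t,x) > 0` for `x < 0` and `λ(t,x) = 0` for
`x ≥ 0`, and `X` is continuous, then the image under `Λ` of the zero set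
`𝒵 = {t ∈ [0,T] : X_t = 0}` has Lebesgue measure zero. -/
theorem image_of_zero_set_null
    (T : ℝ) (hT : 0 ≤ T) (X : ℝ → ℝ) (l : ℝ → ℝ → ℝ)
    (hX : Continuous X)
    (hl_meas : Measurable (Function.uncurry l))
    (hl_nonneg : ∀ t x, 0 ≤ l t x)
    (hl_pos : ∀ t x, x < 0 → 0 < l t x)
    (hl_zero : ∀ t x, 0 ≤ x → l t x = 0)
    (hint : IntegrableOn (fun s => l s (X s)) (Icc 0 T))
    (Λ : ℝ → ℝ) (hΛ : ∀ t, Λ t = ∫ s in (0 : ℝ)..t, l s (X s)) :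
    volume (Λ '' {t | t ∈ Icc (0 : ℝ) T ∧ X t = 0}) = 0 :=
  image_of_zero_set_null_general T X l hX hl_nonneg hl_zero hint Λ hΛ
end

section
/- Suppose Λ is continuous nondecreasing with Λ₀ = 0, derived as Λ_t = ∫₀ᵗ λ(s, X_s) ds with X continuous and λ positive exactly on the negative half-line in x. If t ∈ [0,T] satisfies Λ_t ∈ Λ(𝒵), where 𝒵 is the set of zeros of X, then λ(t, X_t) = 0. -/
open MeasureTheory Set Filter Topology Interval

/-!
If `λ(t, X_t) ≠ 0` then `X_t < 0`, so by continuity of `X` the integrand `λ(s, X_s)` is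
positive for all `s` near `t`. For a zero `u` of `X` with `Λ_u = Λ_t` we have `u ≠ t` and
`∫ᵤᵗ λ(s, X_s) ds = Λ_t - Λ_u = 0`; but the integral of a nonnegative function that is positive
near a point of the (nondegenerate) interval of integration is nonzero.
-/

namespace intervalIntegral

theorem integral_pos_of_nonneg_of_eventually_pos {f : ℝ → ℝ} {a b x : ℝ} (hab : a < b)
    (hx : x ∈ Icc a b) (hf : 0 ≤ᵐ[volume.restrict (Ioc a b)] f)
    (hfi : IntervalIntegrable f volume a b) (hpos : ∀ᶠ s in 𝓝 x, 0 < f s) :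
    0 < ∫ s in a..b, f s := by
  obtain ⟨ε, hε, hball⟩ := Metric.eventually_nhds_iff.mp hpos
  set c := max a (x - ε)
  set d := min b (x + ε)
  have hcd : c < d := max_lt (lt_min hab (by linarith [hx.1])) (lt_min (by linarith [hx.2])
    (by linarith))
  have hac : a ≤ c := le_max_left _ _
  have hdb : d ≤ b := min_le_left _ _
  have hpos_cd : 0 < ∫ s in c..d, f s := by
    have hsub : [[c, d]] ⊆ [[a, b]] := by
      rw [uIcc_of_le hcd.le, uIcc_of_le hab.le]
      exact Icc_subset_Icc hac hdb
    refine intervalIntegral_pos_of_pos_on (hfi.mono_set hsub) (fun s hs => hball ?_) hcd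
    rw [Real.dist_eq, abs_lt]
    constructor <;> linarith [hs.1, hs.2, le_max_right a (x - ε), min_le_right b (x + ε)]
  exact hpos_cd.trans_le (integral_mono_interval hac hcd.le hdb hf hfi)

theorem integral_ne_zero_of_nonneg_of_eventually_pos {f : ℝ → ℝ} {a b x : ℝ} (hab : a ≠ b)
    (hx : x ∈ uIcc a b) (hf : 0 ≤ᵐ[volume.restrict (Ι a b)] f)
    (hfi : IntervalIntegrable f volume a b) (hpos : ∀ᶠ s in 𝓝 x, 0 < f s) :
    ∫ s in a..b, f s ≠ 0 := by
  rcases hab.lt_or_gt with hlt | hgt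
  · rw [uIcc_of_le hlt.le] at hx
    rw [uIoc_of_le hlt.le] at hf
    exact (integral_pos_of_nonneg_of_eventually_pos hlt hx hf hfi hpos).ne'
  · rw [uIcc_of_ge hgt.le] at hx
    rw [uIoc_of_ge hgt.le] at hf
    rw [integral_symm, neg_ne_zero]
    exact (integral_pos_of_nonneg_of_eventually_pos hgt hx hf hfi.symm hpos).ne'

end intervalIntegral

theorem intensity_vanishes_on_image_of_zero_set_general
    (T : ℝ) (X : ℝ → ℝ) (l : ℝ → ℝ → ℝ)
    (hX : Continuous X)
    (hl_nonneg : ∀ t x, 0 ≤ l t x)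
    (hl_pos : ∀ t x, x < 0 → 0 < l t x)
    (hl_zero : ∀ t x, 0 ≤ x → l t x = 0)
    (hint : IntegrableOn (fun s => l s (X s)) (Icc 0 T))
    (Λ : ℝ → ℝ) (hΛ : ∀ t, Λ t = ∫ s in (0 : ℝ)..t, l s (X s))
    (t : ℝ) (ht : t ∈ Icc (0 : ℝ) T)
    (hmem : Λ t ∈ Λ '' {u | u ∈ Icc (0 : ℝ) T ∧ X u = 0}) :
    l t (X t) = 0 := by
  by_contra hne
  have hXt : X t < 0 := not_le.mp fun h => hne (hl_zero t (X t) h)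
  obtain ⟨u, ⟨hu, hXu⟩, hΛu⟩ := hmem
  have hut : u ≠ t := fun h => hXt.ne (h ▸ hXu)
  have hInt : ∀ a ∈ Icc (0 : ℝ) T, ∀ b ∈ Icc (0 : ℝ) T,
      IntervalIntegrable (fun s => l s (X s)) volume a b := fun a ha b hb =>
    (hint.mono_set (uIcc_subset_Icc ha hb)).intervalIntegrable
  have h0 : (0 : ℝ) ∈ Icc (0 : ℝ) T := ⟨le_rfl, ht.1.trans ht.2⟩
  have hzero : ∫ s in u..t, l s (X s) = 0 := by
    rw [← intervalIntegral.integral_interval_sub_left (hInt 0 h0 t ht) (hInt 0 h0 u hu),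
      ← hΛ, ← hΛ, hΛu, sub_self]
  have hpos : ∀ᶠ s in 𝓝 t, 0 < l s (X s) :=
    ((hX.tendsto t).eventually (eventually_lt_nhds hXt)).mono fun s hs => hl_pos s (X s) hs
  exact intervalIntegral.integral_ne_zero_of_nonneg_of_eventually_pos hut right_mem_uIcc
    (ae_of_all _ fun s => hl_nonneg s (X s)) (hInt u hu t ht) hpos hzero

/-- With `Λ_t = ∫₀ᵗ λ(s, X_s) ds`, `X` continuous and `λ` positive exactly on the
negative half-line in `x`: if `t ∈ [0,T]` satisfies `Λ_t ∈ Λ(𝒵)` where `𝒵` is the zero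
set of `X` on `[0,T]`, then `λ(t, X_t) = 0`. -/
theorem intensity_vanishes_on_image_of_zero_set
    (T : ℝ) (hT : 0 ≤ T) (X : ℝ → ℝ) (l : ℝ → ℝ → ℝ)
    (hX : Continuous X)
    (hl_meas : Measurable (Function.uncurry l))
    (hl_nonneg : ∀ t x, 0 ≤ l t x)
    (hl_pos : ∀ t x, x < 0 → 0 < l t x)
    (hl_zero : ∀ t x, 0 ≤ x → l t x = 0)
    (hint : IntegrableOn (fun s => l s (X s)) (Icc 0 T))
    (Λ : ℝ → ℝ) (hΛ : ∀ t, Λ t = ∫ s in (0 : ℝ)..t, l s (X s))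
    (t : ℝ) (ht : t ∈ Icc (0 : ℝ) T)
    (hmem : Λ t ∈ Λ '' {u | u ∈ Icc (0 : ℝ) T ∧ X u = 0}) :
    l t (X t) = 0 :=
  intensity_vanishes_on_image_of_zero_set_general T X l hX hl_nonneg hl_pos hl_zero hint Λ hΛ t ht
    hmem
end

section
/- Monotone limits and lim sup inequality: with L and Lⁿ as above (Lⁿ nondecreasing in n, pointwise a.s. limits ℓ on rationals, L the right-continuous regularization of ℓ), for every t ∈ [0, T+1] one has lim_n Lⁿ_t ≤ L_t almost surely. -/
open MeasureTheory Set Filter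
open scoped Topology

/-! Fix `ω` and a rational `s > t`. Monotonicity of the paths gives `L n t ≤ L n s`, so
`limsup_n L n t ≤ lim_n L n s = ℓ s`; letting `s ↓ t` through the rationals gives `L_t`.
Only countably many rationals are involved, so the a.s. convergences at them hold
simultaneously on one full-measure set. -/

/-- The rationals of `(t, b]`, along which `L` is the right limit of `ℓ`. -/
def ratIoc (t b : ℝ) : Set ℝ := {s : ℝ | t < s ∧ s ≤ b ∧ ∃ q : ℚ, (q : ℝ) = s}

lemma ratIoc_countable (t b : ℝ) : (ratIoc t b).Countable :=
  (countable_range ((↑) : ℚ → ℝ)).mono fun _ hs => hs.2.2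

lemma nhdsWithin_ratIoc_neBot {t b : ℝ} (htb : t < b) : (𝓝[ratIoc t b] t).NeBot := by
  rw [← mem_closure_iff_nhdsWithin_neBot]
  have hsub : Ioo t b ∩ range ((↑) : ℚ → ℝ) ⊆ ratIoc t b :=
    fun _ ⟨⟨hts, hsb⟩, q, hq⟩ => ⟨hts, hsb.le, q, hq⟩
  have hIoo : closure (Ioo t b) ⊆ closure (Ioo t b ∩ range ((↑) : ℚ → ℝ)) :=
    closure_minimal (Rat.denseRange_cast.open_subset_closure_inter isOpen_Ioo) isClosed_closure
  exact closure_mono hsub <| hIoo <| (closure_Ioo htb.ne).symm ▸ left_mem_Icc.2 htb.le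

lemma limsup_le_of_le_of_tendsto {u v : ℕ → ℝ} {c : ℝ}
    (hbdd : IsBoundedUnder (· ≥ ·) atTop u) (huv : ∀ n, u n ≤ v n)
    (hv : Tendsto v atTop (𝓝 c)) : limsup u atTop ≤ c :=
  hv.limsup_eq ▸ limsup_le_limsup (Eventually.of_forall huv) hbdd.isCoboundedUnder_le
    hv.isBoundedUnder_le

lemma limsup_le_of_tendsto_nhdsWithin {u : ℕ → ℝ → ℝ} {ℓ : ℝ → ℝ} {S : Set ℝ} {t c : ℝ}
    [(𝓝[S] t).NeBot] (hmono : ∀ n, Monotone (u n))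
    (hbdd : IsBoundedUnder (· ≥ ·) atTop fun n => u n t) (hS : ∀ s ∈ S, t ≤ s)
    (hconv : ∀ s ∈ S, Tendsto (fun n => u n s) atTop (𝓝 (ℓ s)))
    (hc : Tendsto ℓ (𝓝[S] t) (𝓝 c)) : limsup (fun n => u n t) atTop ≤ c :=
  ge_of_tendsto hc <| eventually_mem_nhdsWithin.mono fun s hs =>
    limsup_le_of_le_of_tendsto hbdd (fun n => hmono n (hS s hs)) (hconv s hs)

theorem monotone_limit_limsup_le_general
    {Ω : Type*} [MeasurableSpace Ω] (P : Measure Ω)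
    (T : ℝ)
    (L : ℕ → ℝ → Ω → ℝ)
    (hrange : ∀ n t ω, L n t ω ∈ Icc (0 : ℝ) 1)
    (hpathmono : ∀ n ω, Monotone fun t => L n t ω)
    (ℓ : ℝ → Ω → ℝ)
    (hℓ : ∀ t : ℝ, ((t ∈ Icc (0 : ℝ) (T + 1) ∧ ∃ q : ℚ, (q : ℝ) = t) ∨ t = T + 1) →
      ∀ᵐ ω ∂P, Tendsto (fun n => L n t ω) atTop (𝓝 (ℓ t ω)))
    (Llim : ℝ → Ω → ℝ)
    (hLlim : ∀ t ∈ Ico (0 : ℝ) (T + 1), ∀ ω,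
      Tendsto (fun s => ℓ s ω)
        (𝓝[{s : ℝ | t < s ∧ s ≤ T + 1 ∧ ∃ q : ℚ, (q : ℝ) = s}] t) (𝓝 (Llim t ω)))
    (hLlimT : ∀ ω, Llim (T + 1) ω = ℓ (T + 1) ω) :
    ∀ t ∈ Icc (0 : ℝ) (T + 1),
      ∀ᵐ ω ∂P, Filter.limsup (fun n => L n t ω) atTop ≤ Llim t ω := by
  intro t ⟨ht0, htT⟩
  rcases htT.eq_or_lt with rfl | htT
  · filter_upwards [hℓ _ (Or.inr rfl)] with ω hω
    rw [hω.limsup_eq, hLlimT]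
  have : (𝓝[ratIoc t (T + 1)] t).NeBot := nhdsWithin_ratIoc_neBot htT
  have hconv : ∀ᵐ ω ∂P, ∀ s ∈ ratIoc t (T + 1),
      Tendsto (fun n => L n s ω) atTop (𝓝 (ℓ s ω)) :=
    (ae_ball_iff (ratIoc_countable t (T + 1))).2 fun s ⟨hts, hsT, hq⟩ =>
      hℓ s (Or.inl ⟨⟨ht0.trans hts.le, hsT⟩, hq⟩)
  filter_upwards [hconv] with ω hω
  exact limsup_le_of_tendsto_nhdsWithin (hpathmono · ω)
    (isBoundedUnder_of ⟨0, fun n => (hrange n t ω).1⟩) (fun s hs => hs.1.le) hω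
    (hLlim t ⟨ht0, htT⟩ ω)

/-- Monotone limits and lim sup inequality: with `Lⁿ` nondecreasing in `n`, pointwise
a.s. limits `ℓ` on rationals (and at `T+1`), and `L` the right-continuous
regularization of `ℓ`, for every `t ∈ [0, T+1]` one has `lim_n Lⁿ_t ≤ L_t` almost
surely (stated via `limsup`). -/
theorem monotone_limit_limsup_le
    {Ω : Type*} [MeasurableSpace Ω] (P : Measure Ω) [IsProbabilityMeasure P]
    (T : ℝ) (hT : 0 ≤ T)
    (L : ℕ → ℝ → Ω → ℝ)
    (hrange : ∀ n t ω, L n t ω ∈ Icc (0 : ℝ) 1)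
    (hpathmono : ∀ n ω, Monotone fun t => L n t ω)
    (hzero : ∀ n, ∀ t < (0 : ℝ), ∀ ω, L n t ω = 0)
    (hmono : ∀ m n : ℕ, n ≤ m → ∀ᵐ ω ∂P, ∀ t ∈ Icc (0 : ℝ) (T + 1), L n t ω ≤ L m t ω)
    (ℓ : ℝ → Ω → ℝ)
    (hℓ : ∀ t : ℝ, ((t ∈ Icc (0 : ℝ) (T + 1) ∧ ∃ q : ℚ, (q : ℝ) = t) ∨ t = T + 1) →
      ∀ᵐ ω ∂P, Tendsto (fun n => L n t ω) atTop (𝓝 (ℓ t ω)))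
    (Llim : ℝ → Ω → ℝ)
    (hLlim : ∀ t ∈ Ico (0 : ℝ) (T + 1), ∀ ω,
      Tendsto (fun s => ℓ s ω)
        (𝓝[{s : ℝ | t < s ∧ s ≤ T + 1 ∧ ∃ q : ℚ, (q : ℝ) = s}] t) (𝓝 (Llim t ω)))
    (hLlimT : ∀ ω, Llim (T + 1) ω = ℓ (T + 1) ω) :
    ∀ t ∈ Icc (0 : ℝ) (T + 1),
      ∀ᵐ ω ∂P, Filter.limsup (fun n => L n t ω) atTop ≤ Llim t ω :=
  monotone_limit_limsup_le_general P T L hrange hpathmono ℓ hℓ Llim hLlim hLlimT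
end

section
/- Downcrossing property implies right-continuity of the hitting time from above: let x : [0, T₁] → ℝ be càdlàg with only negative jumps, set τ(x) = inf{0 < t ≤ T₁ : x_t ≤ 0} (inf ∅ = ∞). Suppose τ(x) < T₁ and x has the downcrossing property at τ(x): for every δ > 0 there exists t ∈ [τ(x), τ(x)+δ] with x_t < 0. If x_n → x in the Skorokhod M1 topology on D[0, T₁], then lim sup_n τ(x_n) ≤ τ(x). -/
/-!
By the downcrossing property and right-continuity, `x` takes a negative value `x t < 0` at some
time `t ∈ (τ, τ + δ)`. The point `(t, x t)` lies on the completed graph of `x`, so `M1`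
convergence eventually yields a point of the completed graph of `x_n` at a positive time
before `τ + δ` and with negative height; such a point is either a negative value of `x_n` or a
negative left limit, and then `x_n` is negative slightly earlier.
-/

open Set Filter
open scoped Topology

/-- The left limit of `x` at `t`, with the convention `x(0−) = x(0)`. -/
noncomputable def leftLimAt (x : ℝ → ℝ) (t : ℝ) : ℝ :=
  if t = 0 then x 0 else Function.leftLim x t

/-- The completed graph of a càdlàg function `x` on `[0,T]`: the set of points `(t,z)`
with `z` between `x(t−)` and `x(t)`. -/
def completedGraph (T : ℝ) (x : ℝ → ℝ) : Set (ℝ × ℝ) :=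
  {p | p.1 ∈ Icc 0 T ∧
    p.2 ∈ Icc (min (leftLimAt x p.1) (x p.1)) (max (leftLimAt x p.1) (x p.1))}

/-- The order on the completed graph of `x`: `(t₁,z₁) ≤ (t₂,z₂)` if `t₁ < t₂`, or
`t₁ = t₂` and `z₁` is closer to `x(t₁−)` than `z₂`. -/
def graphLE (x : ℝ → ℝ) (p q : ℝ × ℝ) : Prop :=
  p.1 < q.1 ∨ (p.1 = q.1 ∧ |p.2 - leftLimAt x p.1| ≤ |q.2 - leftLimAt x p.1|)

/-- `(r, u)` is a parametric representation of the completed graph of `x` on `[0,T]`: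
a continuous nondecreasing (with respect to the graph order) map from `[0,1]` onto the
completed graph. -/
def IsParamRep (T : ℝ) (x : ℝ → ℝ) (r u : ℝ → ℝ) : Prop :=
  ContinuousOn r (Icc 0 1) ∧ ContinuousOn u (Icc 0 1) ∧
  (∀ s ∈ Icc (0 : ℝ) 1, (r s, u s) ∈ completedGraph T x) ∧
  (∀ p ∈ completedGraph T x, ∃ s ∈ Icc (0 : ℝ) 1, (r s, u s) = p) ∧
  (∀ s₁ ∈ Icc (0 : ℝ) 1, ∀ s₂ ∈ Icc (0 : ℝ) 1, s₁ ≤ s₂ →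
    graphLE x (r s₁, u s₁) (r s₂, u s₂))

/-- Convergence `x_n → x` in the Skorokhod `M1` topology on `D[0,T]`: for every
`ε > 0`, eventually there exist parametric representations of `x` and `x_n` that are
uniformly `ε`-close. -/
def TendstoM1 (T : ℝ) (xn : ℕ → ℝ → ℝ) (x : ℝ → ℝ) : Prop :=
  ∀ ε > (0 : ℝ), ∃ N : ℕ, ∀ n ≥ N, ∃ r u rn un : ℝ → ℝ,
    IsParamRep T x r u ∧ IsParamRep T (xn n) rn un ∧
    ∀ s ∈ Icc (0 : ℝ) 1, |r s - rn s| ≤ ε ∧ |u s - un s| ≤ ε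

/-- `x` is càdlàg on `[0,T]`: right-continuous, with left limits. -/
def CadlagOn (T : ℝ) (x : ℝ → ℝ) : Prop :=
  (∀ t ∈ Ico (0 : ℝ) T, ContinuousWithinAt x (Ici t) t) ∧
  (∀ t ∈ Ioc (0 : ℝ) T, Tendsto x (𝓝[Iio t] t) (𝓝 (Function.leftLim x t)))

def HasDowncrossingAt (x : ℝ → ℝ) (τ : ℝ) : Prop :=
  ∀ δ > (0 : ℝ), ∃ t ∈ Icc τ (τ + δ), x t < 0

lemma exists_mem_Ioo_lt_of_continuousWithinAt_Ici {f : ℝ → ℝ} {a b c : ℝ}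
    (hf : ContinuousWithinAt f (Ici a) a) (hfa : f a < c) (hab : a < b) :
    ∃ t ∈ Ioo a b, f t < c := by
  have hlt : ∀ᶠ t in 𝓝[>] a, f t < c :=
    (hf.mono_left (nhdsWithin_mono _ Ioi_subset_Ici_self)).eventually (eventually_lt_nhds hfa)
  obtain ⟨t, hft, ht⟩ := (hlt.and (Ioo_mem_nhdsGT hab)).exists
  exact ⟨t, ht, hft⟩

lemma exists_mem_Ioo_lt_of_tendsto_nhdsLT {f : ℝ → ℝ} {a t l c : ℝ}
    (hf : Tendsto f (𝓝[<] t) (𝓝 l)) (hl : l < c) (hat : a < t) :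
    ∃ s ∈ Ioo a t, f s < c := by
  obtain ⟨s, hfs, hs⟩ := ((hf.eventually (eventually_lt_nhds hl)).and (Ioo_mem_nhdsLT hat)).exists
  exact ⟨s, hs, hfs⟩

/-- The negative value is found strictly after `τ`, hence at a positive time even if `τ = 0`. -/
lemma HasDowncrossingAt.exists_mem_Ioo_neg {T τ : ℝ} {x : ℝ → ℝ} (hx : CadlagOn T x)
    (hdown : HasDowncrossingAt x τ) (hτ₀ : 0 ≤ τ) (hτT : τ < T) {δ : ℝ} (hδ : 0 < δ) :
    ∃ t ∈ Ioo τ (τ + δ), t ≤ T ∧ x t < 0 := by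
  set δ' := min δ (T - τ)
  have hδ' : 0 < δ' := lt_min hδ (by linarith)
  obtain ⟨t₀, ⟨hτt₀, ht₀⟩, hxt₀⟩ := hdown (δ' / 2) (by linarith)
  have ht₀T : t₀ < T := by linarith [min_le_right δ (T - τ)]
  obtain ⟨t, ⟨ht₀t, ht⟩, hxt⟩ := exists_mem_Ioo_lt_of_continuousWithinAt_Ici
    (hx.1 t₀ ⟨hτ₀.trans hτt₀, ht₀T⟩) hxt₀ (show t₀ < τ + δ' by linarith)
  exact ⟨t, ⟨by linarith, by linarith [min_le_left δ (T - τ)]⟩,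
    by linarith [min_le_right δ (T - τ)], hxt⟩

/-- On a jump the negative value of `y` is found just before `p.1`, via the left limit. -/
lemma exists_neg_of_mem_completedGraph {T : ℝ} {y : ℝ → ℝ} (hy : CadlagOn T y) {p : ℝ × ℝ}
    (hp : p ∈ completedGraph T y) (hp₁ : 0 < p.1) (hp₂ : p.2 < 0) :
    ∃ s ∈ Ioc 0 p.1, y s < 0 := by
  obtain ⟨⟨-, hpT⟩, hmin, -⟩ := hp
  rcases min_lt_iff.mp (hmin.trans_lt hp₂) with hleft | hval
  · rw [leftLimAt, if_neg hp₁.ne'] at hleft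
    obtain ⟨s, hs, hys⟩ := exists_mem_Ioo_lt_of_tendsto_nhdsLT (hy.2 p.1 ⟨hp₁, hpT⟩) hleft hp₁
    exact ⟨s, Ioo_subset_Ioc_self hs, hys⟩
  · exact ⟨p.1, ⟨hp₁, le_rfl⟩, hval⟩

lemma TendstoM1.eventually_exists_mem_completedGraph {T : ℝ} {xn : ℕ → ℝ → ℝ} {x : ℝ → ℝ}
    (hconv : TendstoM1 T xn x) {p : ℝ × ℝ} (hp : p ∈ completedGraph T x) {ε : ℝ}
    (hε : 0 < ε) :
    ∀ᶠ n in atTop, ∃ q ∈ completedGraph T (xn n), |p.1 - q.1| ≤ ε ∧ |p.2 - q.2| ≤ ε := by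
  obtain ⟨N, hN⟩ := hconv ε hε
  filter_upwards [eventually_ge_atTop N] with n hn
  obtain ⟨r, u, rn, un, hrep, hrepn, hclose⟩ := hN n hn
  obtain ⟨s, hs, rfl⟩ := hrep.2.2.2.1 p hp
  exact ⟨(rn s, un s), hrepn.2.2.1 s hs, hclose s hs⟩

lemma TendstoM1.eventually_exists_neg {T : ℝ} {xn : ℕ → ℝ → ℝ} {x : ℝ → ℝ}
    (hconv : TendstoM1 T xn x) (hxn : ∀ n, CadlagOn T (xn n)) {t b : ℝ} (ht : 0 < t)
    (htb : t < b) (htT : t ≤ T) (hxt : x t < 0) :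
    ∀ᶠ n in atTop, ∃ s ∈ Ioo 0 b, s ≤ T ∧ xn n s < 0 := by
  have hp : (t, x t) ∈ completedGraph T x :=
    ⟨⟨ht.le, htT⟩, min_le_right _ _, le_max_right _ _⟩
  obtain ⟨ε, hε, hεx, hεt, hεb⟩ : ∃ ε > 0, ε < -x t ∧ ε < t ∧ ε < b - t := by
    have hm : 0 < min (-x t) (min t (b - t)) := lt_min (by linarith) (lt_min ht (by linarith))
    refine ⟨min (-x t) (min t (b - t)) / 2, half_pos hm, ?_, ?_, ?_⟩ <;>
      linarith [min_le_left (-x t) (min t (b - t)), min_le_right (-x t) (min t (b - t)),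
        min_le_left t (b - t), min_le_right t (b - t)]
  filter_upwards [hconv.eventually_exists_mem_completedGraph hp hε]
    with n ⟨q, hq, hq₁, hq₂⟩
  obtain ⟨hq₁l, hq₁u⟩ := abs_le.mp hq₁
  obtain ⟨hq₂l, -⟩ := abs_le.mp hq₂
  obtain ⟨s, ⟨hs₀, hsq⟩, hxs⟩ :=
    exists_neg_of_mem_completedGraph (hxn n) hq (by linarith) (by linarith)
  exact ⟨s, ⟨hs₀, by linarith⟩, hsq.trans hq.1.2, hxs⟩

theorem m1_limsup_hitting_le_general
    (T₁ : ℝ)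
    (x : ℝ → ℝ) (xn : ℕ → ℝ → ℝ)
    (hx : CadlagOn T₁ x)
    (hxn : ∀ n, CadlagOn T₁ (xn n))
    (hτlt : sInf {t : ℝ | 0 < t ∧ t ≤ T₁ ∧ x t ≤ 0} < T₁)
    (hdown : ∀ δ > (0 : ℝ), ∃ t ∈ Icc (sInf {t : ℝ | 0 < t ∧ t ≤ T₁ ∧ x t ≤ 0})
      (sInf {t : ℝ | 0 < t ∧ t ≤ T₁ ∧ x t ≤ 0} + δ), x t < 0)
    (hconv : TendstoM1 T₁ xn x) :
    ∀ δ > (0 : ℝ), ∀ᶠ n in atTop, ∃ t : ℝ, 0 < t ∧ t ≤ T₁ ∧ xn n t ≤ 0 ∧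
      t ≤ sInf {t : ℝ | 0 < t ∧ t ≤ T₁ ∧ x t ≤ 0} + δ := by
  intro δ hδ
  set τ := sInf {t : ℝ | 0 < t ∧ t ≤ T₁ ∧ x t ≤ 0}
  have hτ₀ : 0 ≤ τ := Real.sInf_nonneg fun t ht => ht.1.le
  obtain ⟨t, ⟨hτt, htδ⟩, htT, hxt⟩ :=
    HasDowncrossingAt.exists_mem_Ioo_neg hx hdown hτ₀ hτlt hδ
  filter_upwards [hconv.eventually_exists_neg hxn (hτ₀.trans_lt hτt) htδ htT hxt]
    with n ⟨s, ⟨hs₀, hsδ⟩, hsT, hxs⟩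
  exact ⟨s, hs₀, hsT, hxs.le, hsδ.le⟩

/-- Downcrossing implies upper semicontinuity of the hitting time: let `x` be càdlàg on
`[0,T₁]` with only negative jumps, let `τ(x) = inf{0 < t ≤ T₁ : x_t ≤ 0} < T₁`, and
suppose `x` has the downcrossing property at `τ(x)`. If `x_n → x` in `M1`, then
`limsup_n τ(x_n) ≤ τ(x)`: for every `δ > 0`, eventually the hitting set of `x_n` meets
`(0, τ(x) + δ]`. -/
theorem m1_limsup_hitting_le
    (T₁ : ℝ) (hT : 0 < T₁)
    (x : ℝ → ℝ) (xn : ℕ → ℝ → ℝ)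
    (hx : CadlagOn T₁ x)
    (hxn : ∀ n, CadlagOn T₁ (xn n))
    (hneg : ∀ t ∈ Ioc (0 : ℝ) T₁, x t ≤ Function.leftLim x t)
    (hne : {t : ℝ | 0 < t ∧ t ≤ T₁ ∧ x t ≤ 0}.Nonempty)
    (hτlt : sInf {t : ℝ | 0 < t ∧ t ≤ T₁ ∧ x t ≤ 0} < T₁)
    (hdown : ∀ δ > (0 : ℝ), ∃ t ∈ Icc (sInf {t : ℝ | 0 < t ∧ t ≤ T₁ ∧ x t ≤ 0})
      (sInf {t : ℝ | 0 < t ∧ t ≤ T₁ ∧ x t ≤ 0} + δ), x t < 0)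
    (hconv : TendstoM1 T₁ xn x) :
    ∀ δ > (0 : ℝ), ∀ᶠ n in atTop, ∃ t : ℝ, 0 < t ∧ t ≤ T₁ ∧ xn n t ≤ 0 ∧
      t ≤ sInf {t : ℝ | 0 < t ∧ t ≤ T₁ ∧ x t ≤ 0} + δ :=
  m1_limsup_hitting_le_general T₁ x xn hx hxn hτlt hdown hconv
end
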